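/- The relation ≪_right on the set 𝒜_C(S,P) of isotopy classes of properly embedded arcs in a punctured surface starting at a base point *_C on a boundary component C is a strict partial order: it is transitive and irreflexive. -/
import Mathlib


/-- The strongly right-veering relation `≪_right` on (isotopy classes of) arcs:
`a ≪ b` iff there is a chain `a = α₀ ≺ α₁ ≺ ⋯ ≺ α_k = b` (with `k ≥ 1`) such that
consecutive arcs have disjoint interiors. Here `prec` is the right-veering order
`≺_right` and `disj a b` means `Int(a) ∩ Int(b) = ∅`. -/
def llRight {A : Type*} (prec disj : A → A → Prop) (a b : A) : Prop :=
  ∃ (k : ℕ) (f : Fin (k + 1) → A), 0 < k ∧ f 0 = a ∧ f (Fin.last k) = b ∧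
    (∀ i : Fin k, prec (f i.castSucc) (f i.succ)) ∧
    (∀ i : Fin k, disj (f i.castSucc) (f i.succ))

lemma llRight_iff_transGen {A : Type*} (prec disj : A → A → Prop) (a b : A) :
    llRight prec disj a b ↔
      Relation.TransGen (fun x y => prec x y ∧ disj x y) a b := by
  constructor
  · rintro ⟨k, f, hk, h0, hl, hp, hd⟩
    subst h0 hl
    have key : ∀ j (hj : j < k + 1), 0 < j →
        Relation.TransGen (fun x y => prec x y ∧ disj x y) (f 0) (f ⟨j, hj⟩) := by
      intro j
      induction j with
      | zero => intro _ h; omega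
      | succ n ih =>
          intro hj _
          have hn : n < k := by omega
          have step : prec (f (⟨n, hn⟩ : Fin k).castSucc) (f (⟨n, hn⟩ : Fin k).succ) ∧
              disj (f (⟨n, hn⟩ : Fin k).castSucc) (f (⟨n, hn⟩ : Fin k).succ) :=
            ⟨hp _, hd _⟩
          have hcs : (⟨n, hn⟩ : Fin k).castSucc = (⟨n, by omega⟩ : Fin (k + 1)) := rfl
          have hs : (⟨n, hn⟩ : Fin k).succ = (⟨n + 1, hj⟩ : Fin (k + 1)) := rfl
          rw [hcs, hs] at step
          rcases Nat.eq_zero_or_pos n with h0 | h0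
          · subst h0
            exact Relation.TransGen.single step
          · exact Relation.TransGen.tail (ih (by omega) h0) step
    have := key k (by omega) hk
    simpa [Fin.last] using this
  · intro h
    induction h with
    | @single c h =>
        refine ⟨1, ![a, c], one_pos, rfl, rfl, ?_, ?_⟩
        · intro i; fin_cases i; simpa using h.1
        · intro i; fin_cases i; simpa using h.2
    | @tail b c hab hbc ih =>
        obtain ⟨k, f, hk, h0, hl, hp, hd⟩ := ih
        refine ⟨k + 1, Fin.snoc f c, by omega, ?_, ?_, ?_, ?_⟩
        · rw [show (0 : Fin (k + 1 + 1)) = Fin.castSucc 0 from rfl, Fin.snoc_castSucc]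
          exact h0
        · simp [Fin.snoc_last]
        · intro i
          refine Fin.lastCases ?_ ?_ i
          · rw [Fin.succ_last, Fin.snoc_last, Fin.snoc_castSucc, hl]
            exact hbc.1
          · intro j
            rw [Fin.succ_castSucc, Fin.snoc_castSucc, Fin.snoc_castSucc]
            exact hp j
        · intro i
          refine Fin.lastCases ?_ ?_ i
          · rw [Fin.succ_last, Fin.snoc_last, Fin.snoc_castSucc, hl]
            exact hbc.2
          · intro j
            rw [Fin.succ_castSucc, Fin.snoc_castSucc, Fin.snoc_castSucc]
            exact hd j

/-- `≪_right` is a strict partial order on `𝒜_C(S,P)`: transitive and irreflexive.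
The hypotheses encode that `≺_right` is a strict total order on arcs. -/
theorem stmt0 {A : Type*} (prec disj : A → A → Prop)
    (prec_irrefl : ∀ a, ¬ prec a a)
    (prec_trans : ∀ a b c, prec a b → prec b c → prec a c)
    (prec_total : ∀ a b, a ≠ b → prec a b ∨ prec b a)
    (disj_symm : ∀ a b, disj a b → disj b a) :
    Transitive (llRight prec disj) ∧ Irreflexive (llRight prec disj) := by
  constructor
  · intro a b c hab hbc
    rw [llRight_iff_transGen] at *
    exact hab.trans hbc
  · intro a ha
    rw [llRight_iff_transGen] at ha
    have : prec a a := by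
      have : ∀ x, Relation.TransGen (fun x y => prec x y ∧ disj x y) a x → prec a x := by
        intro x hx
        induction hx with
        | single h => exact h.1
        | tail _ h ih => exact prec_trans _ _ _ ih h.1
      exact this a ha
    exact prec_irrefl a this
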